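/- For positive reals x, y, x₀, y₀, the following inequality holds: log(1 + x²/y) ≥ log(1 + x₀²/y₀) - x₀²/y₀ + 2·x₀·x/y₀ - x₀²·(x² + y)/(y₀·(x₀² + y₀)). -/

import Mathlib

/-! The bound is `log u ≥ log u₀ + 1 - u₀ / u` for `u = 1 + x² / y`, combined with
`u₀ / u = u₀ (1 - x² / (x² + y))` and the tangent-plane minorant of the jointly convex
quadratic-over-linear function `x² / z` at `(x₀, x₀² + y₀)`. -/

theorem two_mul_mul_div_sub_le_sq_div (x x₀ : ℝ) {z z₀ : ℝ} (hz : 0 < z) (hz₀ : z₀ ≠ 0) :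
    2 * x₀ * x / z₀ - x₀ ^ 2 * z / z₀ ^ 2 ≤ x ^ 2 / z := by
  have key : x ^ 2 / z - (2 * x₀ * x / z₀ - x₀ ^ 2 * z / z₀ ^ 2) =
      (x * z₀ - x₀ * z) ^ 2 / (z * z₀ ^ 2) := by
    field_simp
    ring
  have : 0 ≤ (x * z₀ - x₀ * z) ^ 2 / (z * z₀ ^ 2) := by positivity
  linarith

theorem Real.log_add_one_sub_div_le_log {u u₀ : ℝ} (hu : 0 < u) (hu₀ : 0 < u₀) :
    Real.log u₀ + 1 - u₀ / u ≤ Real.log u := by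
  have h := Real.one_sub_inv_le_log_of_pos (div_pos hu hu₀)
  rw [inv_div, Real.log_div hu.ne' hu₀.ne'] at h
  linarith

theorem stmt_2_general (x y x₀ y₀ : ℝ) (hy : 0 < y) (hy₀ : 0 < y₀) :
    Real.log (1 + x ^ 2 / y) ≥
      Real.log (1 + x₀ ^ 2 / y₀) - x₀ ^ 2 / y₀ + 2 * x₀ * x / y₀
        - x₀ ^ 2 * (x ^ 2 + y) / (y₀ * (x₀ ^ 2 + y₀)) := by
  have hz : 0 < x ^ 2 + y := by positivity
  have hz₀ : 0 < x₀ ^ 2 + y₀ := by positivity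
  have hlog := Real.log_add_one_sub_div_le_log (u := 1 + x ^ 2 / y) (u₀ := 1 + x₀ ^ 2 / y₀)
    (by positivity) (by positivity)
  have hratio : (1 + x₀ ^ 2 / y₀) / (1 + x ^ 2 / y) =
      1 + x₀ ^ 2 / y₀ - (x₀ ^ 2 + y₀) / y₀ * (x ^ 2 / (x ^ 2 + y)) := by
    field_simp
    ring
  have htangent := mul_le_mul_of_nonneg_left (two_mul_mul_div_sub_le_sq_div x x₀ hz hz₀.ne')
    (div_pos hz₀ hy₀).le
  have hscaled : (x₀ ^ 2 + y₀) / y₀ * (2 * x₀ * x / (x₀ ^ 2 + y₀)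
      - x₀ ^ 2 * (x ^ 2 + y) / (x₀ ^ 2 + y₀) ^ 2) =
      2 * x₀ * x / y₀ - x₀ ^ 2 * (x ^ 2 + y) / (y₀ * (x₀ ^ 2 + y₀)) := by
    field_simp
  linarith

theorem stmt_2 (x y x₀ y₀ : ℝ) (hx : 0 < x) (hy : 0 < y) (hx₀ : 0 < x₀) (hy₀ : 0 < y₀) :
    Real.log (1 + x ^ 2 / y) ≥
      Real.log (1 + x₀ ^ 2 / y₀) - x₀ ^ 2 / y₀ + 2 * x₀ * x / y₀
        - x₀ ^ 2 * (x ^ 2 + y) / (y₀ * (x₀ ^ 2 + y₀)) :=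
  stmt_2_general x y x₀ y₀ hy hy₀
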